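/- arXiv:1808.09755 — 3 statements merged into one kernel-verified Lean document; each statement's English description precedes it below -/
import Mathlib

section
/- Let p ∈ [2,3), let A be a d×q real matrix, a ∈ ℝ^d, h > 0, and let ζ be an ℝ^q-valued random vector with E|ζ|^p < ∞ and Eζ = 0. Then E|a + √h·Aζ|^p ≤ (1 + ((p-1)(p-2)/2)h)|a|^p + h(1 + p + h^{p/2 - 1})‖A‖^p E|ζ|^p, where ‖A‖² = Tr(AA*). -/
/-!
With `u = ‖x + y‖`, `u² = ‖x‖² + 2⟪x, y⟫ + ‖y‖²` lies in `[(‖x‖ - ‖y‖)², (‖x‖ + ‖y‖)²]`. For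
`2 ≤ p ≤ 3` the function `v ↦ v ^ (p/2) - (p/2) ‖x‖^(p-2) v` is convex, so its value at `u²` is
bounded by its values at the two endpoints; after scaling by `‖x‖` these are controlled by the
one-variable inequalities `(1 + t)^p ≤ 1 + p t + p(p-1)/2 t² + t^p` and
`|1 - t|^p ≤ 1 - p t + p(p-1)/2 t² + t^p`, which give
`‖x + y‖^p ≤ ‖x‖^p + p ‖x‖^(p-2) ⟪x, y⟫ + p(p-1)/2 ‖x‖^(p-2) ‖y‖² + ‖y‖^p`.
With `y = √h Aζ`, Young's inequality `p a^(p-2) b² ≤ (p-2) a^p + 2 b^p` splits the quadratic term,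
the linear term has mean zero, and `|Aζ| ≤ ‖A‖ |ζ|` for the Frobenius norm.
-/

open MeasureTheory Matrix

lemma le_of_hasDerivAt_le {D : Set ℝ} (hD : Convex ℝ D) {f g f' g' : ℝ → ℝ}
    (hf : ContinuousOn f D) (hg : ContinuousOn g D)
    (hf' : ∀ x ∈ interior D, HasDerivAt f (f' x) x)
    (hg' : ∀ x ∈ interior D, HasDerivAt g (g' x) x)
    (hle : ∀ x ∈ interior D, f' x ≤ g' x) {a t : ℝ} (ha : a ∈ D) (ht : t ∈ D) (hat : a ≤ t)
    (hfa : f a ≤ g a) : f t ≤ g t := by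
  have hmono := monotoneOn_of_hasDerivWithinAt_nonneg hD (hg.sub hf)
    (fun x hx ↦ ((hg' x hx).sub (hf' x hx)).hasDerivWithinAt)
    (fun x hx ↦ sub_nonneg.2 (hle x hx)) ha ht hat
  simp only [Pi.sub_apply] at hmono
  linarith

lemma one_add_rpow_le_of_le_two {r : ℝ} (hr1 : 1 ≤ r) (hr2 : r ≤ 2) {t : ℝ} (ht : 0 ≤ t) :
    (1 + t) ^ r ≤ 1 + r * t + t ^ r := by
  refine le_of_hasDerivAt_le (convex_Ici 0) (f := fun x ↦ (1 + x) ^ r)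
    (g := fun x ↦ 1 + r * x + x ^ r) (f' := fun x ↦ r * (1 + x) ^ (r - 1))
    (g' := fun x ↦ r + r * x ^ (r - 1)) ?_ ?_ (fun x _ ↦ ?_) (fun x hx ↦ ?_) (fun x hx ↦ ?_)
    (Set.mem_Ici.2 le_rfl) ht ht (by simp [Real.zero_rpow (by linarith : r ≠ 0)])
  · exact ((Real.continuous_rpow_const (by linarith)).comp (continuous_const_add 1)).continuousOn
  · exact (by fun_prop : Continuous fun x : ℝ ↦ 1 + r * x).add
      (Real.continuous_rpow_const (by linarith)) |>.continuousOn
  · simpa using ((hasDerivAt_id x).const_add 1).rpow_const (p := r) (Or.inr hr1)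
  · rw [interior_Ici] at hx
    exact ((((hasDerivAt_id' x).const_mul r).const_add 1).add
      (Real.hasDerivAt_rpow_const (p := r) (Or.inl (ne_of_gt hx)))).congr_deriv (by ring)
  · rw [interior_Ici] at hx
    have := Real.rpow_add_le_add_rpow zero_le_one (le_of_lt hx) (by linarith)
      (by linarith : r - 1 ≤ 1)
    rw [Real.one_rpow] at this
    nlinarith

lemma one_add_rpow_le_of_le_three {p : ℝ} (hp2 : 2 ≤ p) (hp3 : p ≤ 3) {t : ℝ} (ht : 0 ≤ t) :
    (1 + t) ^ p ≤ 1 + p * t + p * (p - 1) / 2 * t ^ 2 + t ^ p := by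
  refine le_of_hasDerivAt_le (convex_Ici 0) (f := fun x ↦ (1 + x) ^ p)
    (g := fun x ↦ 1 + p * x + p * (p - 1) / 2 * x ^ 2 + x ^ p)
    (f' := fun x ↦ p * (1 + x) ^ (p - 1)) (g' := fun x ↦ p + p * (p - 1) * x + p * x ^ (p - 1))
    ?_ ?_ (fun x _ ↦ ?_) (fun x hx ↦ ?_) (fun x hx ↦ ?_)
    (Set.mem_Ici.2 le_rfl) ht ht (by simp [Real.zero_rpow (by linarith : p ≠ 0)])
  · exact ((Real.continuous_rpow_const (by linarith)).comp (continuous_const_add 1)).continuousOn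
  · exact (by fun_prop : Continuous fun x : ℝ ↦ 1 + p * x + p * (p - 1) / 2 * x ^ 2).add
      (Real.continuous_rpow_const (by linarith)) |>.continuousOn
  · simpa using ((hasDerivAt_id x).const_add 1).rpow_const (p := p) (Or.inr (by linarith))
  · rw [interior_Ici] at hx
    exact (((((hasDerivAt_id' x).const_mul p).const_add 1).add
      ((hasDerivAt_pow 2 x).const_mul (p * (p - 1) / 2))).add
      (Real.hasDerivAt_rpow_const (p := p) (Or.inl (ne_of_gt hx)))).congr_deriv (by ring)
  · rw [interior_Ici] at hx
    have := one_add_rpow_le_of_le_two (by linarith : 1 ≤ p - 1) (by linarith) (le_of_lt hx)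
    nlinarith

lemma one_sub_rpow_le {p : ℝ} (hp2 : 2 ≤ p) {t : ℝ} (ht0 : 0 ≤ t) (ht1 : t ≤ 1) :
    (1 - t) ^ p ≤ 1 - p * t + p * (p - 1) / 2 * t ^ 2 := by
  refine le_of_hasDerivAt_le (convex_Icc 0 1) (f := fun x ↦ (1 - x) ^ p)
    (g := fun x ↦ 1 - p * x + p * (p - 1) / 2 * x ^ 2)
    (f' := fun x ↦ -p * (1 - x) ^ (p - 1)) (g' := fun x ↦ -p + p * (p - 1) * x)
    ?_ (by fun_prop) (fun x _ ↦ ?_) (fun x _ ↦ ?_) (fun x hx ↦ ?_)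
    (Set.left_mem_Icc.2 zero_le_one) ⟨ht0, ht1⟩ ht0 (by simp)
  · exact ((Real.continuous_rpow_const (by linarith)).comp
      (by fun_prop : Continuous fun x : ℝ ↦ 1 - x)).continuousOn
  · simpa using ((hasDerivAt_id x).const_sub 1).rpow_const (p := p) (Or.inr (by linarith))
  · exact (((hasDerivAt_id' x).const_mul p).const_sub 1).add
      ((hasDerivAt_pow 2 x).const_mul (p * (p - 1) / 2)) |>.congr_deriv (by ring)
  · rw [interior_Icc] at hx
    have := one_add_mul_self_le_rpow_one_add (by linarith [hx.2] : -1 ≤ -x)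
      (by linarith : 1 ≤ p - 1)
    rw [← sub_eq_add_neg] at this
    nlinarith

lemma abs_one_sub_rpow_le {p : ℝ} (hp2 : 2 ≤ p) {t : ℝ} (ht : 0 ≤ t) :
    |1 - t| ^ p ≤ 1 - p * t + p * (p - 1) / 2 * t ^ 2 + t ^ p := by
  rcases le_total t 1 with ht1 | ht1
  · rw [abs_of_nonneg (by linarith)]
    linarith [one_sub_rpow_le hp2 ht ht1, Real.rpow_nonneg ht p]
  · have hpow : |1 - t| ^ p ≤ t ^ p := by
      gcongr
      rw [abs_of_nonpos (by linarith)]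
      linarith
    nlinarith [mul_nonneg (by linarith : (0:ℝ) ≤ p) (sq_nonneg ((p - 1) * t - 1))]

lemma sq_rpow_half {x : ℝ} (hx : 0 ≤ x) (p : ℝ) : (x ^ 2) ^ (p / 2) = x ^ p := by
  rw [← Real.rpow_natCast_mul hx, Nat.cast_ofNat, mul_div_cancel₀ p two_ne_zero]

lemma rpow_le_of_abs_one_sub_le {p : ℝ} (hp2 : 2 ≤ p) (hp3 : p ≤ 3) {t w : ℝ} (ht : 0 ≤ t)
    (hw : |1 - t| ≤ w) (hw' : w ≤ 1 + t) :
    w ^ p ≤ 1 + p / 2 * (w ^ 2 - 1 - t ^ 2) + p * (p - 1) / 2 * t ^ 2 + t ^ p := by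
  have hw0 : 0 ≤ w := (abs_nonneg _).trans hw
  set H : ℝ → ℝ := fun v ↦ v ^ (p / 2) - p / 2 * v
  have hconv : ConvexOn ℝ (Set.Ici 0) H :=
    (convexOn_rpow (by linarith)).sub (concaveOn_id (convex_Ici 0) |>.smul (by linarith))
  have hseg : w ^ 2 ∈ segment ℝ (|1 - t| ^ 2) ((1 + t) ^ 2) := by
    rw [segment_eq_Icc (pow_le_pow_left₀ (abs_nonneg _) (hw.trans hw') 2)]
    exact ⟨by gcongr, by gcongr⟩
  have key : H (w ^ 2) ≤ 1 - p / 2 * (1 + t ^ 2) + p * (p - 1) / 2 * t ^ 2 + t ^ p := by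
    refine (hconv.le_on_segment (Set.mem_Ici.2 (sq_nonneg _)) (Set.mem_Ici.2 (sq_nonneg _))
      hseg).trans (max_le ?_ ?_)
    · simp only [H]
      rw [sq_rpow_half (abs_nonneg _), sq_abs]
      linarith [abs_one_sub_rpow_le hp2 ht]
    · simp only [H, sq_rpow_half (by linarith : 0 ≤ 1 + t)]
      linarith [one_add_rpow_le_of_le_three hp2 hp3 ht]
  simp only [H, sq_rpow_half hw0] at key
  linarith

lemma norm_add_rpow_le {E : Type*} [NormedAddCommGroup E] [InnerProductSpace ℝ E]
    {p : ℝ} (hp2 : 2 ≤ p) (hp3 : p ≤ 3) (x y : E) :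
    ‖x + y‖ ^ p ≤ ‖x‖ ^ p + p * ‖x‖ ^ (p - 2) * inner ℝ x y
      + p * (p - 1) / 2 * ‖x‖ ^ (p - 2) * ‖y‖ ^ 2 + ‖y‖ ^ p := by
  rcases eq_or_ne x 0 with rfl | hx
  · simp only [zero_add, norm_zero, Real.zero_rpow (by linarith : p ≠ 0), inner_zero_left,
      mul_zero]
    have : 0 ≤ p * (p - 1) / 2 * (0 : ℝ) ^ (p - 2) * ‖y‖ ^ 2 :=
      mul_nonneg (mul_nonneg (by nlinarith) (Real.rpow_nonneg le_rfl _)) (sq_nonneg _)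
    linarith
  set r := ‖x‖ with hr_def
  have hr : 0 < r := norm_pos_iff.2 hx
  have hw : |1 - ‖y‖ / r| ≤ ‖x + y‖ / r := by
    rw [← div_self hr.ne', ← sub_div, abs_div, abs_of_pos hr]
    gcongr
    simpa using abs_norm_sub_norm_le x (-y)
  have hw' : ‖x + y‖ / r ≤ 1 + ‖y‖ / r := by
    rw [← div_self hr.ne', ← add_div]
    gcongr
    exact norm_add_le x y
  have key := mul_le_mul_of_nonneg_left
    (rpow_le_of_abs_one_sub_le hp2 hp3 (by positivity) hw hw') (Real.rpow_nonneg hr.le p)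
  rw [Real.div_rpow (norm_nonneg _) hr.le, Real.div_rpow (norm_nonneg _) hr.le, div_pow,
    norm_add_sq_real, ← hr_def, mul_div_cancel₀ _ (Real.rpow_pos_of_pos hr p).ne'] at key
  rw [Real.rpow_sub hr, Real.rpow_two]
  refine key.trans_eq ?_
  have hrp : r ^ p ≠ 0 := (Real.rpow_pos_of_pos hr p).ne'
  field_simp
  ring

lemma rpow_sub_two_mul_sq_le {p a b : ℝ} (hp2 : 2 ≤ p) (ha : 0 ≤ a) (hb : 0 ≤ b) :
    p * (a ^ (p - 2) * b ^ 2) ≤ (p - 2) * a ^ p + 2 * b ^ p := by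
  have hp : p ≠ 0 := by linarith
  have hamgm := Real.geom_mean_le_arith_mean2_weighted (w₁ := (p - 2) / p) (w₂ := 2 / p)
    (div_nonneg (by linarith) (by linarith)) (div_nonneg zero_le_two (by linarith))
    (Real.rpow_nonneg ha p) (Real.rpow_nonneg hb p) (by field_simp; ring)
  rw [← Real.rpow_mul ha, ← Real.rpow_mul hb, mul_div_cancel₀ _ hp, mul_div_cancel₀ _ hp,
    Real.rpow_two] at hamgm
  calc p * (a ^ (p - 2) * b ^ 2) ≤ p * ((p - 2) / p * a ^ p + 2 / p * b ^ p) :=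
        mul_le_mul_of_nonneg_left hamgm (by linarith)
    _ = (p - 2) * a ^ p + 2 * b ^ p := by field_simp

lemma norm_add_sqrt_smul_rpow_le {E : Type*} [NormedAddCommGroup E] [InnerProductSpace ℝ E]
    {p h : ℝ} (hp2 : 2 ≤ p) (hp3 : p ≤ 3) (hh : 0 ≤ h) (a v : E) :
    ‖a + √h • v‖ ^ p ≤ (1 + (p - 1) * (p - 2) / 2 * h) * ‖a‖ ^ p
      + p * ‖a‖ ^ (p - 2) * √h * inner ℝ a v + h * (p - 1 + h ^ (p / 2 - 1)) * ‖v‖ ^ p := by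
  have hnorm : ‖√h • v‖ = √h * ‖v‖ := by
    rw [norm_smul, Real.norm_of_nonneg (Real.sqrt_nonneg h)]
  have hsq : ‖√h • v‖ ^ 2 = h * ‖v‖ ^ 2 := by
    rw [hnorm, mul_pow, Real.sq_sqrt hh]
  have hpow : ‖√h • v‖ ^ p = h * h ^ (p / 2 - 1) * ‖v‖ ^ p := by
    rw [hnorm, Real.mul_rpow (Real.sqrt_nonneg h) (norm_nonneg v), Real.sqrt_eq_rpow,
      ← Real.rpow_mul hh, ← Real.rpow_one_add' hh (by linarith)]
    ring_nf
  have hyoung := rpow_sub_two_mul_sq_le hp2 (norm_nonneg a) (norm_nonneg v)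
  have hmain := norm_add_rpow_le hp2 hp3 a (√h • v)
  rw [real_inner_smul_right, hsq, hpow] at hmain
  have hscaled := mul_le_mul_of_nonneg_left hyoung
    (mul_nonneg (by linarith : 0 ≤ (p - 1) / 2) hh)
  linarith

lemma MeasureTheory.MemLp.integrable_norm_rpow_ofReal {α E : Type*} [MeasurableSpace α]
    {μ : Measure α} [IsFiniteMeasure μ] [NormedAddCommGroup E] {f : α → E} {p : ℝ} (hp : 0 ≤ p)
    (hf : MemLp f (ENNReal.ofReal p) μ) : Integrable (fun x ↦ ‖f x‖ ^ p) μ := by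
  simpa [ENNReal.toReal_ofReal hp] using hf.integrable_norm_rpow'

lemma integral_norm_add_sqrt_smul_rpow_le {Ω E : Type*} [MeasurableSpace Ω] {μ : Measure Ω}
    [IsProbabilityMeasure μ] [NormedAddCommGroup E] [InnerProductSpace ℝ E] [CompleteSpace E]
    {p h : ℝ} (hp2 : 2 ≤ p) (hp3 : p ≤ 3) (hh : 0 ≤ h) (a : E) {Y : Ω → E}
    (hY : MemLp Y (ENNReal.ofReal p) μ) (hY0 : ∫ ω, Y ω ∂μ = 0) :
    ∫ ω, ‖a + √h • Y ω‖ ^ p ∂μ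
      ≤ (1 + (p - 1) * (p - 2) / 2 * h) * ‖a‖ ^ p
        + h * (p - 1 + h ^ (p / 2 - 1)) * ∫ ω, ‖Y ω‖ ^ p ∂μ := by
  have hYint : Integrable Y μ := hY.integrable (ENNReal.one_le_ofReal.2 (by linarith))
  have hlin : Integrable (fun ω ↦ (1 + (p - 1) * (p - 2) / 2 * h) * ‖a‖ ^ p
      + p * ‖a‖ ^ (p - 2) * √h * inner ℝ a (Y ω)) μ :=
    (integrable_const _).add ((hYint.const_inner a).const_mul _)
  have hYp := hY.integrable_norm_rpow_ofReal (by linarith)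
  calc ∫ ω, ‖a + √h • Y ω‖ ^ p ∂μ
      ≤ ∫ ω, ((1 + (p - 1) * (p - 2) / 2 * h) * ‖a‖ ^ p
          + p * ‖a‖ ^ (p - 2) * √h * inner ℝ a (Y ω)
          + h * (p - 1 + h ^ (p / 2 - 1)) * ‖Y ω‖ ^ p) ∂μ :=
        integral_mono (((memLp_const a).add (hY.const_smul √h)).integrable_norm_rpow_ofReal
          (by linarith)) (hlin.add (hYp.const_mul _))
          fun ω ↦ norm_add_sqrt_smul_rpow_le hp2 hp3 hh a (Y ω)
    _ = (1 + (p - 1) * (p - 2) / 2 * h) * ‖a‖ ^ p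
        + h * (p - 1 + h ^ (p / 2 - 1)) * ∫ ω, ‖Y ω‖ ^ p ∂μ := by
      rw [integral_add hlin (hYp.const_mul _), integral_add (integrable_const _)
        ((hYint.const_inner a).const_mul _), integral_const_mul, integral_const_mul,
        integral_const_mul, integral_inner hYint, hY0, inner_zero_right]
      simp only [integral_const, probReal_univ, smul_eq_mul, one_mul, mul_zero, add_zero]

lemma norm_toEuclideanLin_le {m n : Type*} [Fintype m] [Fintype n] [DecidableEq n]
    (A : Matrix m n ℝ) (x : EuclideanSpace ℝ n) :
    ‖toEuclideanLin A x‖ ≤ √(trace (A * Aᵀ)) * ‖x‖ := by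
  have htr : trace (A * Aᵀ) = ∑ i, ∑ j, A i j ^ 2 := by
    simp only [trace, diag, mul_apply, transpose_apply, sq]
  rw [htr, ← Real.sqrt_sq (norm_nonneg x), ← Real.sqrt_mul (by positivity),
    Real.le_sqrt (norm_nonneg _) (by positivity), EuclideanSpace.norm_sq_eq,
    EuclideanSpace.norm_sq_eq, Finset.sum_mul]
  gcongr with i
  simpa [mulVec, dotProduct] using Finset.sum_mul_sq_le_sq_mul_sq _ (A i) x

theorem stmt1 {Ω : Type*} [MeasurableSpace Ω] (μ : Measure Ω) [IsProbabilityMeasure μ]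
    (d q : ℕ) (p : ℝ) (hp2 : 2 ≤ p) (hp3 : p < 3)
    (A : Matrix (Fin d) (Fin q) ℝ) (a : EuclideanSpace ℝ (Fin d)) (h : ℝ) (hh : 0 < h)
    (ζ : Ω → EuclideanSpace ℝ (Fin q))
    (hζp : MemLp ζ (ENNReal.ofReal p) μ)
    (hζ0 : ∫ ω, ζ ω ∂μ = 0) :
    ∫ ω, ‖a + Real.sqrt h • (Matrix.toEuclideanLin A) (ζ ω)‖ ^ p ∂μ
      ≤ (1 + ((p - 1) * (p - 2) / 2) * h) * ‖a‖ ^ p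
        + h * (1 + p + h ^ (p / 2 - 1)) * Real.sqrt (Matrix.trace (A * Aᵀ)) ^ p
          * ∫ ω, ‖ζ ω‖ ^ p ∂μ := by
  set T := (toEuclideanLin A).toContinuousLinearMap
  set M := √(trace (A * Aᵀ))
  have hTζ0 : ∫ ω, T (ζ ω) ∂μ = 0 := by
    rw [T.integral_comp_comm (hζp.integrable (ENNReal.one_le_ofReal.2 (by linarith))), hζ0,
      map_zero]
  have hmoment : ∫ ω, ‖T (ζ ω)‖ ^ p ∂μ ≤ M ^ p * ∫ ω, ‖ζ ω‖ ^ p ∂μ := by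
    rw [← integral_const_mul]
    refine integral_mono ((T.comp_memLp' hζp).integrable_norm_rpow_ofReal (by linarith))
      ((hζp.integrable_norm_rpow_ofReal (by linarith)).const_mul _) fun ω ↦ ?_
    rw [← Real.mul_rpow (Real.sqrt_nonneg _) (norm_nonneg _)]
    exact Real.rpow_le_rpow (norm_nonneg _) (norm_toEuclideanLin_le A (ζ ω)) (by linarith)
  have hcoef : h * (p - 1 + h ^ (p / 2 - 1)) ≤ h * (1 + p + h ^ (p / 2 - 1)) := by
    gcongr
    linarith
  have hcoef0 : 0 ≤ h * (1 + p + h ^ (p / 2 - 1)) := by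
    have := Real.rpow_nonneg hh.le (p / 2 - 1)
    nlinarith
  calc _ ≤ _ := integral_norm_add_sqrt_smul_rpow_le hp2 hp3.le hh.le a (T.comp_memLp' hζp) hTζ0
    _ ≤ _ := add_le_add le_rfl (mul_le_mul hcoef hmoment
        (integral_nonneg fun _ ↦ by positivity) hcoef0)
    _ = _ := by ring
end

section
/- C² bound for the Euler transition (d = q = 1, zero drift): let σ ∈ C² with σ', σ'' bounded and σσ'' bounded, let ℰ_h(x,z) = x + √h σ(x)z and Pf(x) = E f(ℰ_h(x,Z)), Z ∼ 𝒩(0,1). If f is C² with bounded f', f'', then ‖(Pf)''‖_∞ ≤ ‖f''‖_∞·(1 + (‖σ'‖_∞² + ‖σσ''‖_∞)h). -/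
open MeasureTheory ProbabilityTheory Real Filter
open scoped NNReal

/-!
Write `τ = √h σ` and `Mₙ[φ](w) = E[Zⁿ φ(w + τ(w) Z)]`. Differentiating under the expectation gives
`Mₙ[φ]' = Mₙ[φ'] + τ' Mₙ₊₁[φ']`, hence `(Pf)' = M₀[f'] + τ' M₁[f']` and
`(Pf)'' = M₀[f''] + 2τ' M₁[f''] + τ'² M₂[f''] + τ'' M₁[f']`. Differentiating the moments one at a
time, rather than the product `f'(ℰ)(1 + τ' Z)`, is what avoids needing a bound on `σ''` alone:
Stein's identity `E[Z F(Z)] = E[F'(Z)]` turns `τ'' M₁[f']` into `τ τ'' M₀[f'']`, so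
`(Pf)'' = E[f''(ℰ) ((1 + τ' Z)² + τ τ'')]`, and `E[(1 + τ' Z)²] = 1 + τ'²`.
-/

section Gaussian

variable {μ : ℝ} {v : ℝ≥0}

lemma hasDerivAt_gaussianPDFReal (x : ℝ) :
    HasDerivAt (gaussianPDFReal μ v) (-((x - μ) / v) * gaussianPDFReal μ v x) x := by
  have h := ((((hasDerivAt_id' x).sub_const μ).fun_pow 2).fun_neg.div_const (2 * (v : ℝ))).exp
    |>.const_mul (√(2 * π * v))⁻¹
  rw [gaussianPDFReal_def]
  refine h.congr_deriv ?_
  by_cases hv : (v : ℝ) = 0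
  · simp [hv]
  · field_simp
    ring

lemma integrable_gaussianReal_iff {g : ℝ → ℝ} (hv : v ≠ 0) :
    Integrable g (gaussianReal μ v) ↔ Integrable (fun x => gaussianPDFReal μ v x * g x) := by
  rw [gaussianReal_of_var_ne_zero _ hv,
    integrable_withDensity_iff_integrable_smul' (measurable_gaussianPDF μ v)
      (ae_of_all _ fun _ => ENNReal.ofReal_lt_top)]
  simp [gaussianPDF, ENNReal.toReal_ofReal (gaussianPDFReal_nonneg μ v _)]

theorem integral_sub_mul_eq_mul_integral_deriv_gaussianReal (hv : v ≠ 0) {F F' : ℝ → ℝ}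
    (hF : ∀ x, HasDerivAt F (F' x) x) (hF_int : Integrable F (gaussianReal μ v))
    (hF'_int : Integrable F' (gaussianReal μ v))
    (hxF_int : Integrable (fun x => (x - μ) * F x) (gaussianReal μ v)) :
    ∫ x, (x - μ) * F x ∂gaussianReal μ v = v * ∫ x, F' x ∂gaussianReal μ v := by
  rw [integrable_gaussianReal_iff hv] at hF_int hF'_int hxF_int
  have hv' : (v : ℝ) ≠ 0 := by exact_mod_cast hv
  have parts := integral_mul_deriv_eq_deriv_mul_of_integrable (fun x _ => hF x)
    (fun x _ => hasDerivAt_gaussianPDFReal (μ := μ) (v := v) x)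
    ((hxF_int.const_mul (-(v : ℝ)⁻¹)).congr
      (ae_of_all _ fun x => by simp only [Pi.mul_apply]; ring))
    (hF'_int.congr (ae_of_all _ fun x => mul_comm _ _))
    (hF_int.congr (ae_of_all _ fun x => mul_comm _ _))
  rw [integral_gaussianReal_eq_integral_smul hv, integral_gaussianReal_eq_integral_smul hv]
  calc ∫ x, gaussianPDFReal μ v x • ((x - μ) * F x)
        = -v * ∫ x, F x * (-((x - μ) / v) * gaussianPDFReal μ v x) := by
        rw [← integral_const_mul]
        congr 1 with x
        field_simp
        simp only [smul_eq_mul]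
        ring
    _ = v * ∫ x, gaussianPDFReal μ v x • F' x := by
        rw [parts, neg_mul_neg]
        simp only [smul_eq_mul, mul_comm]

lemma integrable_abs_pow_gaussianReal (n : ℕ) :
    Integrable (fun x => |x| ^ n) (gaussianReal μ v) :=
  (memLp_id_gaussianReal n).integrable_norm_pow'

lemma integral_sq_gaussianReal : ∫ x, x ^ 2 ∂gaussianReal μ v = μ ^ 2 + v := by
  have := variance_eq_sub (memLp_id_gaussianReal (μ := μ) (v := v) 2)
  simp only [variance_id_gaussianReal, Pi.pow_apply, id_eq, integral_id_gaussianReal] at this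
  linarith

end Gaussian

lemma abs_sub_le_of_abs_deriv_le {φ : ℝ → ℝ} {B : ℝ} (hφ : Differentiable ℝ φ)
    (hB : ∀ t, |deriv φ t| ≤ B) (a b : ℝ) : |φ a - φ b| ≤ B * |a - b| :=
  convex_univ.norm_image_sub_le_of_norm_deriv_le (fun t _ => hφ t) (fun t _ => hB t)
    (Set.mem_univ b) (Set.mem_univ a)

section EulerMoment

variable {ν : Measure ℝ} {τ φ : ℝ → ℝ} {L B : ℝ}

/-- `Mₙ[φ](w)` for the Euler transition `ℰ(w, z) = w + τ(w) z`, with `Z ∼ ν`. -/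
noncomputable def eulerMoment (ν : Measure ℝ) (τ φ : ℝ → ℝ) (n : ℕ) (w : ℝ) : ℝ :=
  ∫ z, z ^ n * φ (w + τ w * z) ∂ν

lemma integrable_pow_mul_of_abs_le (hmom : ∀ k : ℕ, Integrable (fun z => |z| ^ k) ν)
    {g : ℝ → ℝ} (hg : AEStronglyMeasurable g ν) {c₀ c₁ : ℝ} (hbound : ∀ z, |g z| ≤ c₀ + c₁ * |z|)
    (n : ℕ) : Integrable (fun z => z ^ n * g z) ν := by
  refine (((hmom n).const_mul c₀).add ((hmom (n + 1)).const_mul c₁)).mono'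
    ((continuous_pow n).aestronglyMeasurable.mul hg) (ae_of_all _ fun z => ?_)
  calc ‖z ^ n * g z‖ = |z| ^ n * |g z| := by rw [Real.norm_eq_abs, abs_mul, abs_pow]
    _ ≤ |z| ^ n * (c₀ + c₁ * |z|) := by gcongr; exact hbound z
    _ = c₀ * |z| ^ n + c₁ * |z| ^ (n + 1) := by ring

lemma integrable_pow_mul_comp_of_abs_le (hmom : ∀ k : ℕ, Integrable (fun z => |z| ^ k) ν)
    {g : ℝ → ℝ} (hg : Measurable g) (hgB : ∀ t, |g t| ≤ B) (n : ℕ) (a b : ℝ) :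
    Integrable (fun z => z ^ n * g (a + b * z)) ν :=
  integrable_pow_mul_of_abs_le hmom (hg.comp (by fun_prop)).aestronglyMeasurable (c₁ := 0)
    (fun z => by simpa using hgB _) n

lemma hasDerivAt_eulerMoment (hmom : ∀ k : ℕ, Integrable (fun z => |z| ^ k) ν)
    (hτ : Differentiable ℝ τ) (hτ' : ∀ w, |deriv τ w| ≤ L)
    (hφ : Differentiable ℝ φ) (hφ' : ∀ t, |deriv φ t| ≤ B) (n : ℕ) (x : ℝ) :
    HasDerivAt (eulerMoment ν τ φ n)
      (eulerMoment ν τ (deriv φ) n x + deriv τ x * eulerMoment ν τ (deriv φ) (n + 1) x) x := by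
  have hφc := hφ.continuous
  have hφ'm : Measurable (deriv φ) := measurable_deriv φ
  have hF_int : Integrable (fun z => z ^ n * φ (x + τ x * z)) ν := by
    refine integrable_pow_mul_of_abs_le hmom (by fun_prop) (c₀ := |φ x|) (c₁ := B * |τ x|)
      (fun z => ?_) n
    have := abs_sub_le_of_abs_deriv_le hφ hφ' (x + τ x * z) x
    rw [add_sub_cancel_left, abs_mul] at this
    linarith [abs_sub_abs_le_abs_sub (φ (x + τ x * z)) (φ x)]
  have hbound : ∀ w z, ‖z ^ n * (deriv φ (w + τ w * z) * (1 + deriv τ w * z))‖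
      ≤ B * |z| ^ n + B * L * |z| ^ (n + 1) := by
    intro w z
    have hB : 0 ≤ B := (abs_nonneg _).trans (hφ' 0)
    have h1 : |1 + deriv τ w * z| ≤ 1 + L * |z| := by
      grw [abs_add_le, abs_one, abs_mul, hτ' w]
    calc ‖z ^ n * (deriv φ (w + τ w * z) * (1 + deriv τ w * z))‖
        = |z| ^ n * (|deriv φ (w + τ w * z)| * |1 + deriv τ w * z|) := by
          rw [Real.norm_eq_abs, abs_mul, abs_mul, abs_pow]
      _ ≤ |z| ^ n * (B * (1 + L * |z|)) := by gcongr; exact hφ' _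
      _ = B * |z| ^ n + B * L * |z| ^ (n + 1) := by ring
  have hderiv : ∀ w z, HasDerivAt (fun w => z ^ n * φ (w + τ w * z))
      (z ^ n * (deriv φ (w + τ w * z) * (1 + deriv τ w * z))) w := fun w z =>
    ((hφ _).hasDerivAt.comp w ((hasDerivAt_id w).add ((hτ w).hasDerivAt.mul_const z))).const_mul _
  obtain ⟨-, h⟩ := hasDerivAt_integral_of_dominated_loc_of_deriv_le (x₀ := x) Filter.univ_mem
    (Eventually.of_forall fun w => (by fun_prop : Continuous _).aestronglyMeasurable) hF_int
    (by fun_prop) (ae_of_all _ fun z w _ => hbound w z)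
    (((hmom n).const_mul B).add ((hmom (n + 1)).const_mul (B * L)))
    (ae_of_all _ fun z w _ => hderiv w z)
  refine h.congr_deriv ?_
  have hint := integrable_pow_mul_comp_of_abs_le hmom hφ'm hφ'
  rw [eulerMoment, eulerMoment, ← integral_const_mul,
    ← integral_add (hint n _ _) ((hint _ _ _).const_mul _)]
  congr 1 with z
  ring

end EulerMoment

section GaussianEuler

variable {τ φ ψ : ℝ → ℝ} {L B C : ℝ}

local notation "γ" => gaussianReal 0 1

lemma eulerMoment_one_gaussianReal (hψ : Differentiable ℝ ψ) (hψB : ∀ t, |ψ t| ≤ B)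
    (hψ' : ∀ t, |deriv ψ t| ≤ C) (x : ℝ) :
    eulerMoment γ τ ψ 1 x = τ x * eulerMoment γ τ (deriv ψ) 0 x := by
  have hmom := integrable_abs_pow_gaussianReal (μ := 0) (v := 1)
  have hψm := hψ.continuous.measurable
  have hE : ∀ z, HasDerivAt (fun z => x + τ x * z) (τ x) z := fun z => by
    simpa using ((hasDerivAt_id z).const_mul (τ x)).const_add x
  have stein := integral_sub_mul_eq_mul_integral_deriv_gaussianReal one_ne_zero
    (F := fun z => ψ (x + τ x * z)) (F' := fun z => deriv ψ (x + τ x * z) * τ x)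
    (fun z => (hψ _).hasDerivAt.comp z (hE z))
    (by simpa using integrable_pow_mul_comp_of_abs_le hmom hψm hψB 0 x (τ x))
    (by simpa using (integrable_pow_mul_comp_of_abs_le hmom (measurable_deriv ψ) hψ' 0 x
      (τ x)).mul_const (τ x))
    (by simpa using integrable_pow_mul_comp_of_abs_le hmom hψm hψB 1 x (τ x))
  simp only [sub_zero, NNReal.coe_one, one_mul, integral_mul_const] at stein
  simp only [eulerMoment, pow_one, pow_zero, one_mul]
  rw [stein, mul_comm]

lemma integral_one_add_mul_sq_gaussianReal (a : ℝ) : ∫ z, (1 + a * z) ^ 2 ∂γ = 1 + a ^ 2 := by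
  have h1 : Integrable (fun z : ℝ => z) γ := (memLp_id_gaussianReal 1).integrable le_rfl
  have h2 : Integrable (fun z : ℝ => z ^ 2) γ := (memLp_id_gaussianReal 2).integrable_sq
  calc ∫ z, (1 + a * z) ^ 2 ∂γ = ∫ z, (1 + 2 * a * z) + a ^ 2 * z ^ 2 ∂γ := by
        congr with z; ring
    _ = 1 + a ^ 2 := by
        rw [integral_add (f := fun z => 1 + 2 * a * z) ((integrable_const 1).add (h1.const_mul _))
            (h2.const_mul _), integral_add (integrable_const _) (h1.const_mul _),
          integral_const_mul, integral_const_mul, integral_sq_gaussianReal]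
        simp

lemma abs_integral_mul_one_add_mul_sq_le {g : ℝ → ℝ}
    (hgC : ∀ z, |g z| ≤ C) (a : ℝ) : |∫ z, g z * (1 + a * z) ^ 2 ∂γ| ≤ C * (1 + a ^ 2) := by
  have hint : Integrable (fun z => (1 + a * z) ^ 2) γ :=
    ((memLp_const (1 : ℝ)).add ((memLp_id_gaussianReal 2).const_mul a)).integrable_sq
  calc |∫ z, g z * (1 + a * z) ^ 2 ∂γ| ≤ ∫ z, C * (1 + a * z) ^ 2 ∂γ :=
        norm_integral_le_of_norm_le (f := fun z => g z * (1 + a * z) ^ 2) (hint.const_mul C)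
          (ae_of_all _ fun z => by
            rw [Real.norm_eq_abs, abs_mul, abs_sq]
            exact mul_le_mul_of_nonneg_right (hgC z) (sq_nonneg _))
    _ = C * (1 + a ^ 2) := by rw [integral_const_mul, integral_one_add_mul_sq_gaussianReal]

lemma integral_mul_one_add_mul_sq_eq (hψ : Measurable ψ) (hψC : ∀ t, |ψ t| ≤ C) (a x : ℝ) :
    ∫ z, ψ (x + τ x * z) * (1 + a * z) ^ 2 ∂γ
      = eulerMoment γ τ ψ 0 x + 2 * a * eulerMoment γ τ ψ 1 x + a ^ 2 * eulerMoment γ τ ψ 2 x := by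
  have hint := integrable_pow_mul_comp_of_abs_le
    (integrable_abs_pow_gaussianReal (μ := 0) (v := 1)) hψ hψC
  rw [eulerMoment, eulerMoment, eulerMoment, ← integral_const_mul, ← integral_const_mul,
    ← integral_add (hint 0 _ _) ((hint 1 _ _).const_mul _),
    ← integral_add (f := fun z => z ^ 0 * ψ (x + τ x * z) + 2 * a * (z ^ 1 * ψ (x + τ x * z)))
      ((hint 0 _ _).add ((hint 1 _ _).const_mul _)) ((hint 2 _ _).const_mul _)]
  congr with z
  ring

theorem deriv_deriv_integral_comp_euler (hτ : Differentiable ℝ τ)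
    (hτ₂ : Differentiable ℝ (deriv τ))
    (hτ' : ∀ w, |deriv τ w| ≤ L) (hφ : Differentiable ℝ φ) (hφ₂ : Differentiable ℝ (deriv φ))
    (hφ' : ∀ t, |deriv φ t| ≤ B) (hφ'' : ∀ t, |deriv (deriv φ) t| ≤ C) (x : ℝ) :
    deriv (deriv fun y => ∫ z, φ (y + τ y * z) ∂γ) x
      = ∫ z, deriv (deriv φ) (x + τ x * z) * (1 + deriv τ x * z) ^ 2 ∂γ
        + τ x * deriv (deriv τ) x * ∫ z, deriv (deriv φ) (x + τ x * z) ∂γ := by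
  have hmom : ∀ k : ℕ, Integrable (fun z => |z| ^ k) γ := integrable_abs_pow_gaussianReal
  have hP : (fun y => ∫ z, φ (y + τ y * z) ∂γ) = eulerMoment γ τ φ 0 := by
    funext y; simp [eulerMoment]
  have hP' : deriv (eulerMoment γ τ φ 0)
      = fun w => eulerMoment γ τ (deriv φ) 0 w + deriv τ w * eulerMoment γ τ (deriv φ) 1 w :=
    funext fun w => (hasDerivAt_eulerMoment hmom hτ hτ' hφ hφ' 0 w).deriv
  have hP'' := (hasDerivAt_eulerMoment hmom hτ hτ' hφ₂ hφ'' 0 x).fun_add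
    ((hτ₂ x).hasDerivAt.fun_mul (hasDerivAt_eulerMoment hmom hτ hτ' hφ₂ hφ'' 1 x))
  rw [hP, hP', hP''.deriv, eulerMoment_one_gaussianReal hφ₂ hφ' hφ'' x,
    integral_mul_one_add_mul_sq_eq (measurable_deriv _) hφ'']
  simp only [eulerMoment, pow_zero, one_mul]
  ring

theorem abs_deriv_deriv_integral_comp_euler_le (hτ : Differentiable ℝ τ)
    (hτ₂ : Differentiable ℝ (deriv τ))
    (hτ' : ∀ w, |deriv τ w| ≤ L) (hφ : Differentiable ℝ φ) (hφ₂ : Differentiable ℝ (deriv φ))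
    (hφ' : ∀ t, |deriv φ t| ≤ B) (hφ'' : ∀ t, |deriv (deriv φ) t| ≤ C) (x : ℝ) :
    |deriv (deriv fun y => ∫ z, φ (y + τ y * z) ∂γ) x|
      ≤ C * (1 + deriv τ x ^ 2 + |τ x * deriv (deriv τ) x|) := by
  have hI : |∫ z, deriv (deriv φ) (x + τ x * z) ∂γ| ≤ C := by
    simpa using norm_integral_le_of_norm_le_const (μ := γ)
      (f := fun z => deriv (deriv φ) (x + τ x * z)) (ae_of_all _ fun z => hφ'' _)
  rw [deriv_deriv_integral_comp_euler hτ hτ₂ hτ' hφ hφ₂ hφ' hφ'' x]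
  calc _ ≤ C * (1 + deriv τ x ^ 2) + |τ x * deriv (deriv τ) x| * C := by
        refine (abs_add_le _ _).trans (add_le_add
          (abs_integral_mul_one_add_mul_sq_le (fun z => hφ'' _) _) ?_)
        rw [abs_mul]
        exact mul_le_mul_of_nonneg_left hI (abs_nonneg _)
    _ = C * (1 + deriv τ x ^ 2 + |τ x * deriv (deriv τ) x|) := by ring

end GaussianEuler

/-- C² bound for the Euler transition (d = q = 1, zero drift). -/
theorem stmt17 (σ f : ℝ → ℝ) (h : ℝ) (hh : 0 < h)
    (hσ1 : Differentiable ℝ σ) (hσ2 : Differentiable ℝ (deriv σ))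
    (B1 B2 B3 B4 : ℝ)
    (hB1 : ∀ x, |deriv σ x| ≤ B1)
    (hB2 : ∀ x, |σ x * deriv (deriv σ) x| ≤ B2)
    (hf1 : Differentiable ℝ f) (hf2 : Differentiable ℝ (deriv f))
    (hB4 : ∀ x, |deriv f x| ≤ B4)
    (hB3 : ∀ x, |deriv (deriv f) x| ≤ B3) :
    ∀ x : ℝ,
      |deriv (deriv (fun y =>
          ∫ z, f (y + Real.sqrt h * σ y * z) ∂(gaussianReal 0 1))) x|
        ≤ B3 * (1 + (B1 ^ 2 + B2) * h) := by
  intro x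
  have hτ' : deriv (fun y => √h * σ y) = fun y => √h * deriv σ y := deriv_const_mul_field' _
  have hτ'' : deriv (deriv fun y => √h * σ y) = fun y => √h * deriv (deriv σ) y := by
    rw [hτ', deriv_const_mul_field']
  have hτ'B : ∀ y, |deriv (fun y => √h * σ y) y| ≤ √h * B1 := fun y => by
    rw [hτ', abs_mul, abs_of_nonneg (sqrt_nonneg h)]
    exact mul_le_mul_of_nonneg_left (hB1 y) (sqrt_nonneg h)
  have hP'' := abs_deriv_deriv_integral_comp_euler_le (τ := fun y => √h * σ y)
    (hσ1.const_mul _) (by rw [hτ']; exact hσ2.const_mul _) hτ'B hf1 hf2 hB4 hB3 x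
  rw [hτ'', hτ'] at hP''
  have hsq : (√h * deriv σ x) ^ 2 ≤ B1 ^ 2 * h := by
    rw [mul_pow, sq_sqrt hh.le, mul_comm]
    exact mul_le_mul_of_nonneg_right (sq_le_sq' (abs_le.mp (hB1 x)).1 (abs_le.mp (hB1 x)).2) hh.le
  have hσσ'' : |√h * σ x * (√h * deriv (deriv σ) x)| ≤ B2 * h := by
    have hc : √h * σ x * (√h * deriv (deriv σ) x) = h * (σ x * deriv (deriv σ) x) := by
      linear_combination (σ x * deriv (deriv σ) x) * mul_self_sqrt hh.le
    rw [hc, abs_mul, abs_of_pos hh, mul_comm]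
    exact mul_le_mul_of_nonneg_right (hB2 x) hh.le
  have hB3₀ : 0 ≤ B3 := (abs_nonneg _).trans (hB3 0)
  refine hP''.trans (mul_le_mul_of_nonneg_left ?_ hB3₀)
  linarith
end

section
/- Second derivative bound for the one-step jump transition (b = σ = 0): let Pf(x) = (1−λh)·f(x − λ̃hγ(x)) + λh·E f(x + γ(x)U_h), with λ̃ = λEU, U_h = U − λ̃h, 0 < λh < 1. If γ ∈ C² with γ', γ'', γγ'' bounded and EU² < ∞, and f ∈ C² with bounded f', f'', then ‖(Pf)''‖_∞ ≤ (1 + Ch)‖f''‖_∞ + λh C'‖f'‖_∞, where C and C' depend only on ‖γ'‖_∞, ‖γγ''‖_∞, ‖γ''‖_∞, EU, EU², λ (and not on h ≤ 1/λ). -/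
open MeasureTheory

/-!
Write `c = λ E[U] h`. The drift step is the jump `y ↦ y + γ y * a` with `a = -c`, and the second
derivative of `y ↦ f (y + γ y * a)` is `f'' (1 + γ' a)² + f' γ'' a`, of size at most
`‖f''‖ (1 + ‖γ'‖ |a|)² + ‖f'‖ ‖γ''‖ |a|`. In the jump part `a = U - c` is dominated by
`|U| + |E U|`, which is square integrable, so we may differentiate twice under the integral sign.
Since `|c| = λh |E U|`, the drift part contributes `(1 + O(h)) ‖f''‖ + O(h) ‖f'‖`, while the jump part
is an `h`-independent bound multiplied by `λh`, so no integration by parts is needed.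
-/

theorem hasDerivAt_integral_of_forall_norm_deriv_le {α E : Type*} [MeasurableSpace α]
    {μ : Measure α} [NormedAddCommGroup E] [NormedSpace ℝ E] {F F' : ℝ → α → E}
    {bound : α → ℝ} {x₀ : ℝ} (hF_meas : ∀ x, AEStronglyMeasurable (F x) μ)
    (hF_int : Integrable (F x₀) μ) (hF'_meas : AEStronglyMeasurable (F' x₀) μ)
    (h_bound : ∀ x a, ‖F' x a‖ ≤ bound a) (bound_integrable : Integrable bound μ)
    (h_diff : ∀ x a, HasDerivAt (F · a) (F' x a) x) :
    Integrable (F' x₀) μ ∧ HasDerivAt (fun x ↦ ∫ a, F x a ∂μ) (∫ a, F' x₀ a ∂μ) x₀ :=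
  hasDerivAt_integral_of_dominated_loc_of_deriv_le Filter.univ_mem (.of_forall hF_meas) hF_int
    hF'_meas (.of_forall fun a x _ ↦ h_bound x a) bound_integrable
    (.of_forall fun a x _ ↦ h_diff x a)

theorem deriv_deriv_eq_of_hasDerivAt {F F' : ℝ → ℝ} {F'' x : ℝ}
    (h : ∀ y, HasDerivAt F (F' y) y) (h' : HasDerivAt F' F'' x) : deriv (deriv F) x = F'' := by
  rw [funext fun y ↦ (h y).deriv]
  exact h'.deriv

theorem abs_one_add_mul_le {g a G r : ℝ} (hg : |g| ≤ G) (ha : |a| ≤ r) :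
    |1 + g * a| ≤ 1 + G * r := by
  calc |1 + g * a| ≤ 1 + |g| * |a| := by simpa [abs_mul] using abs_add_le 1 (g * a)
    _ ≤ 1 + G * r := by gcongr; exact (abs_nonneg g).trans hg

section JumpComposition

variable {γ f : ℝ → ℝ} {G1 G2 B1 B2 a r : ℝ}

theorem hasDerivAt_comp_add_mul (hf : Differentiable ℝ f) (hγ : Differentiable ℝ γ) (a y : ℝ) :
    HasDerivAt (fun z ↦ f (z + γ z * a)) (deriv f (y + γ y * a) * (1 + deriv γ y * a)) y :=
  (hf _).hasDerivAt.comp y ((hasDerivAt_id y).add ((hγ y).hasDerivAt.mul_const a))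

theorem hasDerivAt_deriv_comp_add_mul (hf' : Differentiable ℝ (deriv f))
    (hγ : Differentiable ℝ γ) (hγ' : Differentiable ℝ (deriv γ)) (a y : ℝ) :
    HasDerivAt (fun z ↦ deriv f (z + γ z * a) * (1 + deriv γ z * a))
      (deriv (deriv f) (y + γ y * a) * (1 + deriv γ y * a) ^ 2
        + deriv f (y + γ y * a) * (deriv (deriv γ) y * a)) y := by
  refine ((hasDerivAt_comp_add_mul hf' hγ a y).mul
    (((hγ' y).hasDerivAt.mul_const a).const_add 1)).congr_deriv ?_
  ring

theorem abs_comp_add_mul_le (hf : Differentiable ℝ f) (hB1 : ∀ x, |deriv f x| ≤ B1)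
    (ha : |a| ≤ r) (y : ℝ) : |f (y + γ y * a)| ≤ |f y| + B1 * |γ y| * r := by
  have hB1_nonneg : 0 ≤ B1 := (abs_nonneg _).trans (hB1 0)
  have hlip : |f (y + γ y * a) - f y| ≤ B1 * |γ y * a| := by
    simpa using convex_univ.norm_image_sub_le_of_norm_deriv_le (fun z _ ↦ hf z)
      (fun z _ ↦ hB1 z) (Set.mem_univ y) (Set.mem_univ (y + γ y * a))
  calc |f (y + γ y * a)| ≤ |f y| + |f (y + γ y * a) - f y| := by
        simpa using abs_add_le (f y) (f (y + γ y * a) - f y)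
    _ ≤ |f y| + B1 * |γ y| * r := by
        rw [abs_mul, ← mul_assoc] at hlip
        nlinarith [mul_le_mul_of_nonneg_left ha (mul_nonneg hB1_nonneg (abs_nonneg (γ y)))]

theorem abs_deriv_comp_add_mul_le (hB1 : ∀ x, |deriv f x| ≤ B1) (hG1 : ∀ x, |deriv γ x| ≤ G1)
    (ha : |a| ≤ r) (y : ℝ) :
    |deriv f (y + γ y * a) * (1 + deriv γ y * a)| ≤ B1 * (1 + G1 * r) := by
  rw [abs_mul]
  exact mul_le_mul (hB1 _) (abs_one_add_mul_le (hG1 y) ha) (abs_nonneg _)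
    ((abs_nonneg _).trans (hB1 0))

theorem abs_deriv2_comp_add_mul_le (hB1 : ∀ x, |deriv f x| ≤ B1)
    (hB2 : ∀ x, |deriv (deriv f) x| ≤ B2) (hG1 : ∀ x, |deriv γ x| ≤ G1)
    (hG2 : ∀ x, |deriv (deriv γ) x| ≤ G2) (ha : |a| ≤ r) (y : ℝ) :
    |deriv (deriv f) (y + γ y * a) * (1 + deriv γ y * a) ^ 2
        + deriv f (y + γ y * a) * (deriv (deriv γ) y * a)|
      ≤ B2 * (1 + G1 * r) ^ 2 + B1 * (G2 * r) := by
  have hB1_nonneg : 0 ≤ B1 := (abs_nonneg _).trans (hB1 0)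
  have hB2_nonneg : 0 ≤ B2 := (abs_nonneg _).trans (hB2 0)
  have hG2_nonneg : 0 ≤ G2 := (abs_nonneg _).trans (hG2 0)
  refine (abs_add_le _ _).trans (add_le_add ?_ ?_) <;> simp only [abs_mul, abs_pow]
  · gcongr
    · exact hB2 _
    · exact abs_one_add_mul_le (hG1 y) ha
  · gcongr
    · exact hB1 _
    · exact hG2 y

variable {α : Type*} [MeasurableSpace α] {ν : Measure α} [IsFiniteMeasure ν] {j ρ : α → ℝ}

theorem hasDerivAt_integral_comp_add_mul (hf : Differentiable ℝ f) (hγ : Differentiable ℝ γ)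
    (hB1 : ∀ x, |deriv f x| ≤ B1) (hG1 : ∀ x, |deriv γ x| ≤ G1) (hj : AEMeasurable j ν)
    (hρ : Integrable ρ ν) (hjρ : ∀ u, |j u| ≤ ρ u) (y : ℝ) :
    Integrable (fun u ↦ deriv f (y + γ y * j u) * (1 + deriv γ y * j u)) ν ∧
      HasDerivAt (fun z ↦ ∫ u, f (z + γ z * j u) ∂ν)
        (∫ u, deriv f (y + γ y * j u) * (1 + deriv γ y * j u) ∂ν) y := by
  have hf_cont := hf.continuous
  have hf'_meas := measurable_deriv f
  have hbound : Integrable (fun u ↦ B1 * (1 + G1 * ρ u)) ν :=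
    ((integrable_const 1).add (hρ.const_mul G1)).const_mul B1
  have hF_bound : Integrable (fun u ↦ |f y| + B1 * |γ y| * ρ u) ν :=
    (integrable_const _).add (hρ.const_mul _)
  exact hasDerivAt_integral_of_forall_norm_deriv_le (fun z ↦ by fun_prop)
    (hF_bound.mono' (by fun_prop) (.of_forall fun u ↦ abs_comp_add_mul_le hf hB1 (hjρ u) y))
    (by fun_prop) (fun z u ↦ abs_deriv_comp_add_mul_le hB1 hG1 (hjρ u) z) hbound
    (fun z u ↦ hasDerivAt_comp_add_mul hf hγ (j u) z)

theorem integrable_deriv2_bound (hρ : MemLp ρ 2 ν) :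
    Integrable (fun u ↦ B2 * (1 + G1 * ρ u) ^ 2 + B1 * (G2 * ρ u)) ν :=
  ((((memLp_const (1 : ℝ)).add (hρ.const_mul G1)).integrable_sq.const_mul B2).add
    (((hρ.integrable one_le_two).const_mul G2).const_mul B1))

theorem hasDerivAt_integral_deriv_comp_add_mul (hf : Differentiable ℝ f)
    (hf' : Differentiable ℝ (deriv f)) (hγ : Differentiable ℝ γ) (hγ' : Differentiable ℝ (deriv γ))
    (hB1 : ∀ x, |deriv f x| ≤ B1) (hB2 : ∀ x, |deriv (deriv f) x| ≤ B2)
    (hG1 : ∀ x, |deriv γ x| ≤ G1) (hG2 : ∀ x, |deriv (deriv γ) x| ≤ G2) (hj : AEMeasurable j ν)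
    (hρ : MemLp ρ 2 ν) (hjρ : ∀ u, |j u| ≤ ρ u) (y : ℝ) :
    HasDerivAt (fun z ↦ ∫ u, deriv f (z + γ z * j u) * (1 + deriv γ z * j u) ∂ν)
      (∫ u, (deriv (deriv f) (y + γ y * j u) * (1 + deriv γ y * j u) ^ 2
        + deriv f (y + γ y * j u) * (deriv (deriv γ) y * j u)) ∂ν) y := by
  have hf'_cont := hf'.continuous
  have hf''_meas := measurable_deriv (deriv f)
  exact (hasDerivAt_integral_of_forall_norm_deriv_le (fun z ↦ by fun_prop)
    (hasDerivAt_integral_comp_add_mul hf hγ hB1 hG1 hj (hρ.integrable one_le_two) hjρ y).1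
    (by fun_prop) (fun z u ↦ abs_deriv2_comp_add_mul_le hB1 hB2 hG1 hG2 (hjρ u) z)
    (integrable_deriv2_bound hρ)
    (fun z u ↦ hasDerivAt_deriv_comp_add_mul hf' hγ hγ' (j u) z)).2

theorem abs_integral_deriv2_comp_add_mul_le (hB1 : ∀ x, |deriv f x| ≤ B1)
    (hB2 : ∀ x, |deriv (deriv f) x| ≤ B2) (hG1 : ∀ x, |deriv γ x| ≤ G1)
    (hG2 : ∀ x, |deriv (deriv γ) x| ≤ G2) (hρ : MemLp ρ 2 ν) (hjρ : ∀ u, |j u| ≤ ρ u) (y : ℝ) :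
    |∫ u, (deriv (deriv f) (y + γ y * j u) * (1 + deriv γ y * j u) ^ 2
        + deriv f (y + γ y * j u) * (deriv (deriv γ) y * j u)) ∂ν|
      ≤ B2 * ∫ u, (1 + G1 * ρ u) ^ 2 ∂ν + B1 * (G2 * ∫ u, ρ u ∂ν) := by
  have hρ_int : Integrable ρ ν := hρ.integrable one_le_two
  have hsq : MemLp (fun u ↦ 1 + G1 * ρ u) 2 ν := (memLp_const (1 : ℝ)).add (hρ.const_mul G1)
  refine (norm_integral_le_of_norm_le (integrable_deriv2_bound hρ)
    (.of_forall fun u ↦ (Real.norm_eq_abs _).trans_le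
      (abs_deriv2_comp_add_mul_le hB1 hB2 hG1 hG2 (hjρ u) y))).trans_eq ?_
  rw [integral_add (hsq.integrable_sq.const_mul B2) ((hρ_int.const_mul G2).const_mul B1),
    integral_const_mul, integral_const_mul, integral_const_mul]

theorem abs_deriv_deriv_jump_mixture_le (hf : Differentiable ℝ f)
    (hf' : Differentiable ℝ (deriv f)) (hγ : Differentiable ℝ γ) (hγ' : Differentiable ℝ (deriv γ))
    (hB1 : ∀ x, |deriv f x| ≤ B1) (hB2 : ∀ x, |deriv (deriv f) x| ≤ B2)
    (hG1 : ∀ x, |deriv γ x| ≤ G1) (hG2 : ∀ x, |deriv (deriv γ) x| ≤ G2) {t : ℝ} (ht0 : 0 ≤ t)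
    (ht1 : t ≤ 1) (ha : |a| ≤ r) (hj : AEMeasurable j ν) (hρ : MemLp ρ 2 ν)
    (hjρ : ∀ u, |j u| ≤ ρ u) (x : ℝ) :
    |deriv (deriv fun y ↦ (1 - t) * f (y + γ y * a) + t * ∫ u, f (y + γ y * j u) ∂ν) x|
      ≤ (1 - t) * (B2 * (1 + G1 * r) ^ 2 + B1 * (G2 * r))
        + t * (B2 * ∫ u, (1 + G1 * ρ u) ^ 2 ∂ν + B1 * (G2 * ∫ u, ρ u ∂ν)) := by
  have hP : ∀ y, HasDerivAt _ _ y := fun y ↦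
    ((hasDerivAt_comp_add_mul hf hγ a y).const_mul (1 - t)).fun_add
      ((hasDerivAt_integral_comp_add_mul hf hγ hB1 hG1 hj (hρ.integrable one_le_two) hjρ
        y).2.const_mul t)
  have hP' := ((hasDerivAt_deriv_comp_add_mul hf' hγ hγ' a x).const_mul (1 - t)).fun_add
      ((hasDerivAt_integral_deriv_comp_add_mul hf hf' hγ hγ' hB1 hB2 hG1 hG2 hj hρ hjρ
        x).const_mul t)
  rw [deriv_deriv_eq_of_hasDerivAt hP hP']
  refine (abs_add_le _ _).trans ?_
  rw [abs_mul, abs_mul, abs_of_nonneg (sub_nonneg.2 ht1), abs_of_nonneg ht0]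
  gcongr
  · exact abs_deriv2_comp_add_mul_le hB1 hB2 hG1 hG2 ha x
  · exact abs_integral_deriv2_comp_add_mul_le hB1 hB2 hG1 hG2 hρ hjρ x

end JumpComposition

theorem one_sub_mul_add_mul_le {t S G1 G2 B1 B2 K R : ℝ} (ht0 : 0 ≤ t) (ht1 : t ≤ 1)
    (hS : 0 ≤ S) (hG2 : 0 ≤ G2) (hB1 : 0 ≤ B1) (hB2 : 0 ≤ B2) :
    (1 - t) * (B2 * (1 + G1 * (t * S)) ^ 2 + B1 * (G2 * (t * S))) + t * (B2 * K + B1 * (G2 * R))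
      ≤ (1 + t * (S * G1 * (2 + S * G1) + K)) * B2 + t * (G2 * (R + S)) * B1 := by
  have hsq : (1 + G1 * (t * S)) ^ 2 ≤ 1 + t * (S * G1 * (2 + S * G1)) := by
    nlinarith [mul_le_mul_of_nonneg_right ht1 (mul_nonneg ht0 (sq_nonneg (S * G1)))]
  have hdrift : (1 - t) * (B2 * (1 + G1 * (t * S)) ^ 2) ≤ B2 * (1 + t * (S * G1 * (2 + S * G1))) :=
    calc (1 - t) * (B2 * (1 + G1 * (t * S)) ^ 2) ≤ B2 * (1 + G1 * (t * S)) ^ 2 := by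
          nlinarith [mul_nonneg ht0 (mul_nonneg hB2 (sq_nonneg (1 + G1 * (t * S))))]
      _ ≤ _ := by gcongr
  nlinarith [mul_nonneg (mul_nonneg ht0 ht0) (mul_nonneg hB1 (mul_nonneg hG2 hS))]

theorem stmt19_general (γ : ℝ → ℝ)
    (hγ1 : Differentiable ℝ γ) (hγ2 : Differentiable ℝ (deriv γ))
    (G1 G2 : ℝ)
    (hG1 : ∀ x, |deriv γ x| ≤ G1)
    (hG2 : ∀ x, |deriv (deriv γ) x| ≤ G2)
    (lam : ℝ) (hlam : 0 < lam)
    (ν : Measure ℝ) [IsProbabilityMeasure ν]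
    (hm2 : Integrable (fun u : ℝ => u ^ 2) ν) :
    ∃ C C' : ℝ, 0 ≤ C ∧ 0 ≤ C' ∧
      ∀ h : ℝ, 0 < h → lam * h < 1 →
      ∀ f : ℝ → ℝ, Differentiable ℝ f → Differentiable ℝ (deriv f) →
      ∀ B1 B2 : ℝ, (∀ x, |deriv f x| ≤ B1) → (∀ x, |deriv (deriv f) x| ≤ B2) →
      ∀ x : ℝ,
        |deriv (deriv (fun y =>
            (1 - lam * h) * f (y - (lam * ∫ u, u ∂ν) * h * γ y)
              + lam * h * ∫ u, f (y + γ y * (u - (lam * ∫ v, v ∂ν) * h)) ∂ν)) x|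
          ≤ (1 + C * h) * B2 + lam * h * C' * B1 := by
  set m := ∫ u, u ∂ν
  set ρ : ℝ → ℝ := fun u ↦ |u| + |m|
  have hρ : MemLp ρ 2 ν :=
    ((memLp_two_iff_integrable_sq (by fun_prop)).2 hm2).abs.add (memLp_const |m|)
  have hG1_nonneg : 0 ≤ G1 := (abs_nonneg _).trans (hG1 0)
  have hG2_nonneg : 0 ≤ G2 := (abs_nonneg _).trans (hG2 0)
  refine ⟨lam * (|m| * G1 * (2 + |m| * G1) + ∫ u, (1 + G1 * ρ u) ^ 2 ∂ν),
    G2 * ((∫ u, ρ u ∂ν) + |m|), by positivity, by positivity, ?_⟩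
  intro h hh hlh f hf hf' B1 B2 hB1 hB2 x
  set c := lam * m * h
  have hc : |c| = lam * h * |m| := by
    rw [abs_mul, abs_mul, abs_of_pos hlam, abs_of_pos hh]; ring
  have hjρ : ∀ u, |u - c| ≤ ρ u := fun u ↦ (abs_sub u c).trans (by
    rw [hc]; nlinarith [mul_le_mul_of_nonneg_right hlh.le (abs_nonneg m)])
  have hdrift : ∀ y, y - c * γ y = y + γ y * -c := fun y ↦ by ring
  simp only [hdrift]
  refine (abs_deriv_deriv_jump_mixture_le hf hf' hγ1 hγ2 hB1 hB2 hG1 hG2 (by positivity) hlh.le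
    (abs_neg c).le (j := fun u ↦ u - c) (by fun_prop) hρ hjρ x).trans ?_
  rw [hc]
  exact (one_sub_mul_add_mul_le (by positivity) hlh.le (abs_nonneg m) hG2_nonneg
    ((abs_nonneg _).trans (hB1 0)) ((abs_nonneg _).trans (hB2 0))).trans_eq (by ring)

/-- Second derivative bound for the one-step jump transition (b = σ = 0). -/
theorem stmt19 (γ : ℝ → ℝ)
    (hγ1 : Differentiable ℝ γ) (hγ2 : Differentiable ℝ (deriv γ))
    (G1 G2 G3 : ℝ)
    (hG1 : ∀ x, |deriv γ x| ≤ G1)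
    (hG2 : ∀ x, |deriv (deriv γ) x| ≤ G2)
    (hG3 : ∀ x, |γ x * deriv (deriv γ) x| ≤ G3)
    (lam : ℝ) (hlam : 0 < lam)
    (ν : Measure ℝ) [IsProbabilityMeasure ν]
    (hdensity : ν ≪ volume)
    (hm1 : Integrable (fun u : ℝ => u) ν)
    (hm2 : Integrable (fun u : ℝ => u ^ 2) ν) :
    ∃ C C' : ℝ, 0 ≤ C ∧ 0 ≤ C' ∧
      ∀ h : ℝ, 0 < h → lam * h < 1 →
      ∀ f : ℝ → ℝ, Differentiable ℝ f → Differentiable ℝ (deriv f) →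
      ∀ B1 B2 : ℝ, (∀ x, |deriv f x| ≤ B1) → (∀ x, |deriv (deriv f) x| ≤ B2) →
      ∀ x : ℝ,
        |deriv (deriv (fun y =>
            (1 - lam * h) * f (y - (lam * ∫ u, u ∂ν) * h * γ y)
              + lam * h * ∫ u, f (y + γ y * (u - (lam * ∫ v, v ∂ν) * h)) ∂ν)) x|
          ≤ (1 + C * h) * B2 + lam * h * C' * B1 :=
  stmt19_general γ hγ1 hγ2 G1 G2 hG1 hG2 lam hlam ν hm2
end
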